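/- arXiv:2407.06481 — 6 statements merged into one kernel-verified Lean document; each statement's English description precedes it below -/
import Mathlib

section
/- Let μ, ν be finite nonnegative measures on X, Y (finite sets), and let Γ_≤(μ,ν) be the set of nonnegative measures γ on X × Y whose first marginal is ≤ μ and second marginal is ≤ ν. Define μ̂ = μ + |ν|δ_∞̂ on X̂ = X ∪ {∞̂} and ν̂ = ν + |μ|δ_∞̂ on Ŷ = Y ∪ {∞̂}. Then the map γ ↦ γ̂ := γ + (μ − γ₁) ⊗ δ_∞̂ + δ_∞̂ ⊗ (ν − γ₂) + |γ| δ_{(∞̂,∞̂)} is a well-defined bijection from Γ_≤(μ,ν) onto Γ(μ̂, ν̂), the set of couplings of μ̂ and ν̂. -/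
open scoped BigOperators

variable {X Y : Type*} [Fintype X] [Fintype Y]

/-- Extension of `γ` to the augmented spaces `Option X × Option Y`, where `none`
plays the role of the auxiliary point `∞̂`. -/
noncomputable def hatPlan (μ : X → ℝ) (ν : Y → ℝ) (γ : X × Y → ℝ) :
    Option X × Option Y → ℝ
  | (some x, some y) => γ (x, y)
  | (some x, none) => μ x - ∑ y, γ (x, y)
  | (none, some y) => ν y - ∑ x, γ (x, y)
  | (none, none) => ∑ z : X × Y, γ z

theorem hatPlan_bijOn (μ : X → ℝ) (ν : Y → ℝ)
    (hμ : ∀ x, 0 ≤ μ x) (hν : ∀ y, 0 ≤ ν y) :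
    Set.BijOn (hatPlan μ ν)
      {γ : X × Y → ℝ | (∀ z, 0 ≤ γ z) ∧ (∀ x, ∑ y, γ (x, y) ≤ μ x) ∧
        (∀ y, ∑ x, γ (x, y) ≤ ν y)}
      {γh : Option X × Option Y → ℝ | (∀ z, 0 ≤ γh z) ∧
        (∀ xh : Option X, ∑ yh : Option Y, γh (xh, yh)
            = Option.elim xh (∑ y, ν y) μ) ∧
        (∀ yh : Option Y, ∑ xh : Option X, γh (xh, yh)
            = Option.elim yh (∑ x, μ x) ν)} := by
  refine ⟨?_, ?_, ?_⟩
  · rintro γ ⟨h0, h1, h2⟩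
    refine ⟨?_, ?_, ?_⟩
    · rintro ⟨xh, yh⟩
      match xh, yh with
      | some x, some y => exact h0 _
      | some x, none => exact sub_nonneg.mpr (h1 x)
      | none, some y => exact sub_nonneg.mpr (h2 y)
      | none, none => exact Finset.sum_nonneg fun z _ => h0 z
    · intro xh
      match xh with
      | some x =>
        simp only [Fintype.sum_option, hatPlan, Option.elim]
        ring
      | none =>
        simp only [Fintype.sum_option, hatPlan, Option.elim]
        rw [Finset.sum_sub_distrib, Fintype.sum_prod_type, Finset.sum_comm]
        ring
    · intro yh
      match yh with
      | some y =>
        simp only [Fintype.sum_option, hatPlan, Option.elim]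
        ring
      | none =>
        simp only [Fintype.sum_option, hatPlan, Option.elim]
        rw [Finset.sum_sub_distrib, Fintype.sum_prod_type]
        ring
  · rintro γ - γ' - h
    funext z
    obtain ⟨x, y⟩ := z
    have := congrFun h (some x, some y)
    simpa [hatPlan] using this
  · rintro γh ⟨h0, h1, h2⟩
    refine ⟨fun z => γh (some z.1, some z.2), ⟨?_, ?_, ?_⟩, ?_⟩
    · exact fun z => h0 _
    · intro x
      have := h1 (some x)
      rw [Fintype.sum_option] at this
      simp only [Option.elim] at this
      have h0' := h0 (some x, none)
      linarith
    · intro y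
      have := h2 (some y)
      rw [Fintype.sum_option] at this
      simp only [Option.elim] at this
      have h0' := h0 (none, some y)
      linarith
    · funext z
      obtain ⟨xh, yh⟩ := z
      have hrow : ∀ x : X, γh (some x, none) + ∑ y, γh (some x, some y) = μ x := by
        intro x
        have := h1 (some x)
        rwa [Fintype.sum_option] at this
      have hcol : ∀ y : Y, γh (none, some y) + ∑ x, γh (some x, some y) = ν y := by
        intro y
        have := h2 (some y)
        rwa [Fintype.sum_option] at this
      match xh, yh with
      | some x, some y => rfl
      | some x, none =>
        have := hrow x
        simp only [hatPlan]
        linarith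
      | none, some y =>
        have := hcol y
        simp only [hatPlan]
        linarith
      | none, none =>
        have hr0 : γh (none, none) + ∑ y, γh (none, some y) = ∑ y, ν y := by
          have := h1 none
          rwa [Fintype.sum_option] at this
        have hsum : ∑ y, γh (none, some y)
            + ∑ y, ∑ x, γh (some x, some y) = ∑ y, ν y := by
          rw [← Finset.sum_add_distrib]
          exact Finset.sum_congr rfl fun y _ => hcol y
        simp only [hatPlan]
        rw [Fintype.sum_prod_type, Finset.sum_comm]
        linarith
end

section
/- In the discrete GOPT problem min over γ ∈ Γ_≤(p,q) of ⟨c − (λ₁ ⊕ λ₂), γ⟩, suppose ‖q‖ ≤ ‖p‖ and c_{ij} − (λ₁)ᵢ − (λ₂)ⱼ < −ε₁ for all i,j and some ε₁ > 0. Then every optimal γ satisfies γᵀ1_n = q (the second marginal equals q). -/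
open scoped BigOperators

/-- The feasible set `Γ_≤(p,q)` in the discrete setting. -/
def GammaLE {n m : ℕ} (p : Fin n → ℝ) (q : Fin m → ℝ) (γ : Fin n → Fin m → ℝ) : Prop :=
  (∀ i j, 0 ≤ γ i j) ∧ (∀ i, ∑ j, γ i j ≤ p i) ∧ (∀ j, ∑ i, γ i j ≤ q j)

/-- The GOPT objective `⟨c − λ₁⊕λ₂, γ⟩`. -/
def gobj {n m : ℕ} (c : Fin n → Fin m → ℝ) (l1 : Fin n → ℝ) (l2 : Fin m → ℝ)
    (γ : Fin n → Fin m → ℝ) : ℝ :=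
  ∑ i, ∑ j, (c i j - l1 i - l2 j) * γ i j

theorem gopt_full_second_marginal {n m : ℕ}
    (p : Fin n → ℝ) (q : Fin m → ℝ) (c : Fin n → Fin m → ℝ)
    (l1 : Fin n → ℝ) (l2 : Fin m → ℝ)
    (hp : ∀ i, 0 ≤ p i) (hq : ∀ j, 0 ≤ q j)
    (hl1 : ∀ i, 0 ≤ l1 i) (hl2 : ∀ j, 0 ≤ l2 j)
    (hmass : ∑ j, q j ≤ ∑ i, p i)
    (ε₁ : ℝ) (hε₁ : 0 < ε₁)
    (hneg : ∀ i j, c i j - l1 i - l2 j < -ε₁)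
    (γ : Fin n → Fin m → ℝ)
    (hfeas : GammaLE p q γ)
    (hopt : ∀ γ', GammaLE p q γ' → gobj c l1 l2 γ ≤ gobj c l1 l2 γ') :
    ∀ j, ∑ i, γ i j = q j := by
  intro j₀
  by_contra hne
  obtain ⟨hnn, hrow, hcol⟩ := hfeas
  have hlt : ∑ i, γ i j₀ < q j₀ := lt_of_le_of_ne (hcol j₀) hne
  -- total mass strictly less than ∑ q
  have htot : ∑ i, ∑ j, γ i j < ∑ i, p i := by
    have h1 : ∑ i, ∑ j, γ i j = ∑ j, ∑ i, γ i j := Finset.sum_comm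
    have h2 : ∑ j, ∑ i, γ i j < ∑ j, q j := by
      apply Finset.sum_lt_sum (fun j _ => hcol j) ⟨j₀, Finset.mem_univ _, hlt⟩
    linarith
  -- find a row with slack
  have hex : ∃ i₀, ∑ j, γ i₀ j < p i₀ := by
    by_contra h
    push_neg at h
    have : ∑ i, p i ≤ ∑ i, ∑ j, γ i j := Finset.sum_le_sum (fun i _ => h i)
    linarith
  obtain ⟨i₀, hi₀⟩ := hex
  set δ : ℝ := min (p i₀ - ∑ j, γ i₀ j) (q j₀ - ∑ i, γ i j₀) with hδ
  have hδpos : 0 < δ := lt_min (by linarith) (by linarith)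
  set γ' : Fin n → Fin m → ℝ :=
    fun i j => γ i j + (if i = i₀ then (if j = j₀ then δ else 0) else 0) with hγ'
  have hrowsum : ∀ i, ∑ j, γ' i j = ∑ j, γ i j + (if i = i₀ then δ else 0) := by
    intro i
    simp [hγ', Finset.sum_add_distrib]
  have hcolsum : ∀ j, ∑ i, γ' i j = ∑ i, γ i j + (if j = j₀ then δ else 0) := by
    intro j
    simp [hγ', Finset.sum_add_distrib]
  have hfeas' : GammaLE p q γ' := by
    refine ⟨fun i j => ?_, fun i => ?_, fun j => ?_⟩
    · have := hnn i j
      simp only [hγ']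
      split_ifs <;> linarith
    · rw [hrowsum]
      split_ifs with h
      · subst h
        have : δ ≤ p i - ∑ j, γ i j := min_le_left _ _
        linarith
      · simpa using hrow i
    · rw [hcolsum]
      split_ifs with h
      · subst h
        have : δ ≤ q j - ∑ i, γ i j := min_le_right _ _
        linarith
      · simpa using hcol j
  have hobj : gobj c l1 l2 γ' = gobj c l1 l2 γ + (c i₀ j₀ - l1 i₀ - l2 j₀) * δ := by
    simp only [gobj, hγ', mul_add, Finset.sum_add_distrib]
    congr 1
    rw [Finset.sum_eq_single i₀]
    · rw [Finset.sum_eq_single j₀]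
      · simp
      · intro b _ hb; simp [hb]
      · simp
    · intro b _ hb; simp [hb]
    · simp
  have hbad : gobj c l1 l2 γ' < gobj c l1 l2 γ := by
    have hc := hneg i₀ j₀
    have : (c i₀ j₀ - l1 i₀ - l2 j₀) * δ < 0 := mul_neg_of_neg_of_pos (by linarith) hδpos
    linarith
  exact absurd (hopt γ' hfeas') (not_le.mpr hbad)
end

section
/- For any γ ∈ ℝ₊^{n×m} with |γ| < ‖q‖ and γ1_m ≤ p, γᵀ1_n ≤ q, where ‖q‖ ≤ ‖p‖, there exists γ' ∈ ℝ₊^{n×m} with γ ≤ γ' (entrywise), γ'1_m ≤ p, and γ'ᵀ1_n = q. -/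
open scoped BigOperators

theorem exists_enlarged_plan {n m : ℕ}
    (p : Fin n → ℝ) (q : Fin m → ℝ)
    (hp : ∀ i, 0 ≤ p i) (hq : ∀ j, 0 ≤ q j)
    (hmass : ∑ j, q j ≤ ∑ i, p i)
    (γ : Fin n → Fin m → ℝ)
    (hγ : ∀ i j, 0 ≤ γ i j)
    (hlt : ∑ i, ∑ j, γ i j < ∑ j, q j)
    (hrow : ∀ i, ∑ j, γ i j ≤ p i)
    (hcol : ∀ j, ∑ i, γ i j ≤ q j) :
    ∃ γ' : Fin n → Fin m → ℝ,
      (∀ i j, 0 ≤ γ' i j) ∧ (∀ i j, γ i j ≤ γ' i j) ∧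
      (∀ i, ∑ j, γ' i j ≤ p i) ∧ (∀ j, ∑ i, γ' i j = q j) := by
  set r : Fin n → ℝ := fun i => p i - ∑ j, γ i j with hr
  set d : Fin m → ℝ := fun j => q j - ∑ i, γ i j with hd
  set R : ℝ := ∑ i, r i with hR
  set D : ℝ := ∑ j, d j with hD
  have hr0 : ∀ i, 0 ≤ r i := fun i => sub_nonneg.2 (hrow i)
  have hd0 : ∀ j, 0 ≤ d j := fun j => sub_nonneg.2 (hcol j)
  have hDpos : 0 < D := by
    have : D = ∑ j, q j - ∑ j, ∑ i, γ i j := by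
      simp [hD, hd, Finset.sum_sub_distrib]
    rw [this, Finset.sum_comm]
    linarith
  have hDR : D ≤ R := by
    have hDe : D = ∑ j, q j - ∑ j, ∑ i, γ i j := by
      simp [hD, hd, Finset.sum_sub_distrib]
    have hRe : R = ∑ i, p i - ∑ i, ∑ j, γ i j := by
      simp [hR, hr, Finset.sum_sub_distrib]
    rw [hDe, hRe, Finset.sum_comm (s := Finset.univ) (t := Finset.univ) (f := fun j i => γ i j)]
    linarith
  have hRpos : 0 < R := lt_of_lt_of_le hDpos hDR
  refine ⟨fun i j => γ i j + r i * d j / R, ?_, ?_, ?_, ?_⟩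
  · intro i j
    have : 0 ≤ r i * d j / R := div_nonneg (mul_nonneg (hr0 i) (hd0 j)) hRpos.le
    linarith [hγ i j]
  · intro i j
    have : 0 ≤ r i * d j / R := div_nonneg (mul_nonneg (hr0 i) (hd0 j)) hRpos.le
    linarith
  · intro i
    have : ∑ j, (γ i j + r i * d j / R) = (∑ j, γ i j) + r i * D / R := by
      rw [Finset.sum_add_distrib]
      congr 1
      rw [← Finset.sum_div, ← Finset.mul_sum]
    rw [this]
    have h1 : r i * D / R ≤ r i := by
      rw [div_le_iff₀ hRpos]
      nlinarith [hr0 i]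
    have := hrow i
    simp only [hr] at h1
    linarith
  · intro j
    have : ∑ i, (γ i j + r i * d j / R) = (∑ i, γ i j) + R * d j / R := by
      rw [Finset.sum_add_distrib]
      congr 1
      rw [← Finset.sum_div, ← Finset.sum_mul]
    rw [this, mul_comm, mul_div_assoc, div_self (ne_of_gt hRpos), mul_one]
    simp [hd]
end

section
/- For p ∈ ℝ₊ⁿ, ε > 0, λ ∈ ℝ₊ⁿ, and z ∈ ℝ₊ⁿ with zᵢ > 0, the minimizer of s ↦ Σᵢ λᵢ|pᵢ − sᵢ| + ε·KL(s ∥ z) over s ∈ ℝ₊ⁿ, where KL(s∥z) = Σᵢ (sᵢ ln(sᵢ/zᵢ) − sᵢ + zᵢ), is given componentwise by s*ᵢ = clip(pᵢ, [e^{−λᵢ/ε} zᵢ, e^{λᵢ/ε} zᵢ]), i.e., s*ᵢ = pᵢ if pᵢ ∈ [e^{−λᵢ/ε}zᵢ, e^{λᵢ/ε}zᵢ], s*ᵢ = e^{−λᵢ/ε}zᵢ if pᵢ < e^{−λᵢ/ε}zᵢ, and s*ᵢ = e^{λᵢ/ε}zᵢ if pᵢ > e^{λᵢ/ε}zᵢ.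 -/
open scoped BigOperators

/-- Discrete KL divergence, with `Real.log 0 = 0` realizing `0·ln 0 = 0`. -/
noncomputable def KLvec {n : ℕ} (s z : Fin n → ℝ) : ℝ :=
  ∑ i, (s i * Real.log (s i / z i) - s i + z i)

/-- clip(a, [a₁, a₂]) for a₁ ≤ a₂. -/
noncomputable def clip (a a₁ a₂ : ℝ) : ℝ := max a₁ (min a a₂)

/-- tangent line inequality for t ↦ t log(t/z) - t at c. -/
lemma kl_tangent (t c z : ℝ) (ht : 0 ≤ t) (hc : 0 < c) (hz : 0 < z) :
    Real.log (c / z) * (t - c) ≤ (t * Real.log (t / z) - t) - (c * Real.log (c / z) - c) := by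
  rcases eq_or_lt_of_le ht with h0 | htpos
  · simp [← h0]
    nlinarith [hc.le]
  · have h1 : Real.log (c / t) ≤ c / t - 1 := Real.log_le_sub_one_of_pos (by positivity)
    have h2 : t * Real.log (c / t) ≤ c - t := by
      have := mul_le_mul_of_nonneg_left h1 htpos.le
      have ht' : t * (c / t - 1) = c - t := by field_simp
      linarith [ht' ▸ this]
    have h3 : Real.log (t / z) = Real.log t - Real.log z := Real.log_div htpos.ne' hz.ne'
    have h4 : Real.log (c / z) = Real.log c - Real.log z := Real.log_div hc.ne' hz.ne'
    have h5 : Real.log (c / t) = Real.log c - Real.log t := Real.log_div hc.ne' htpos.ne'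
    nlinarith [h2]

lemma one_dim (p lam z ε t : ℝ) (hlam : 0 ≤ lam) (hz : 0 < z) (hε : 0 < ε)
    (ht : 0 ≤ t) :
    lam * |p - clip p (Real.exp (-lam / ε) * z) (Real.exp (lam / ε) * z)| +
        ε * (clip p (Real.exp (-lam / ε) * z) (Real.exp (lam / ε) * z) *
          Real.log (clip p (Real.exp (-lam / ε) * z) (Real.exp (lam / ε) * z) / z) -
          clip p (Real.exp (-lam / ε) * z) (Real.exp (lam / ε) * z) + z)
      ≤ lam * |p - t| + ε * (t * Real.log (t / z) - t + z) := by
  set lo := Real.exp (-lam / ε) * z with hlo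
  set hi := Real.exp (lam / ε) * z with hhi
  set c := clip p lo hi with hcdef
  have hlopos : 0 < lo := by positivity
  have hhipos : 0 < hi := by positivity
  have hlohi : lo ≤ hi := by
    have h : Real.exp (-lam / ε) ≤ Real.exp (lam / ε) :=
      Real.exp_le_exp.mpr ((div_le_div_iff_of_pos_right hε).mpr (by linarith))
    nlinarith [hz.le]
  have hcpos : 0 < c := lt_of_lt_of_le hlopos (le_max_left _ _)
  have hclo : lo ≤ c := le_max_left _ _
  have hchi : c ≤ hi := by
    simp only [hcdef, clip]
    exact max_le hlohi (min_le_right _ _)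
  have hloz : Real.log (lo / z) = -lam / ε := by
    rw [hlo, mul_div_assoc, div_self hz.ne', mul_one, Real.log_exp]
  have hhiz : Real.log (hi / z) = lam / ε := by
    rw [hhi, mul_div_assoc, div_self hz.ne', mul_one, Real.log_exp]
  set m := ε * Real.log (c / z) with hm
  have hmlb : -lam ≤ m := by
    have : Real.log (lo / z) ≤ Real.log (c / z) :=
      Real.log_le_log (by positivity) (div_le_div_of_nonneg_right hclo hz.le)
    rw [hloz] at this
    have := mul_le_mul_of_nonneg_left this hε.le
    rw [hm]
    calc -lam = ε * (-lam / ε) := by field_simp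
    _ ≤ ε * Real.log (c / z) := this
  have hmub : m ≤ lam := by
    have : Real.log (c / z) ≤ Real.log (hi / z) :=
      Real.log_le_log (by positivity) (div_le_div_of_nonneg_right hchi hz.le)
    rw [hhiz] at this
    have := mul_le_mul_of_nonneg_left this hε.le
    rw [hm]
    calc ε * Real.log (c / z) ≤ ε * (lam / ε) := this
    _ = lam := by field_simp
  have hkl : m * (t - c) ≤ ε * ((t * Real.log (t / z) - t) - (c * Real.log (c / z) - c)) := by
    rw [hm, mul_assoc]
    exact mul_le_mul_of_nonneg_left (kl_tangent t c z ht hcpos hz) hε.le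
  -- enough: lam*|p-c| ≤ lam*|p-t| + m*(t-c)
  have key : lam * |p - c| ≤ lam * |p - t| + m * (t - c) := by
    rcases lt_trichotomy p c with hpc | hpc | hpc
    · -- p < c, so c = lo, m = -lam
      have hcval : c = lo := by
        rcases le_or_gt (min p hi) lo with h | h
        · exact max_eq_left h
        · exfalso
          have : c = min p hi := max_eq_right h.le
          have : c ≤ p := this ▸ min_le_left p hi
          linarith
      have hmval : m = -lam := by
        rw [hm, hcval, hloz]; field_simp
      rw [hmval]
      have h1 : |p - c| = c - p := by rw [abs_of_nonpos (by linarith)]; ring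
      rw [h1]
      have h3 : t - p ≤ |p - t| := by rw [abs_sub_comm]; exact le_abs_self _
      nlinarith [h3]
    · have h0 : |p - c| = 0 := by rw [hpc]; simp
      rw [h0, mul_zero]
      have h1 : |m * (t - c)| ≤ lam * |p - t| := by
        rw [abs_mul, abs_sub_comm, hpc]
        exact mul_le_mul_of_nonneg_right (abs_le.mpr ⟨hmlb, hmub⟩) (abs_nonneg _)
      nlinarith [neg_abs_le (m * (t - c)), h1]
    · -- c < p, so c = hi, m = lam
      have hcval : c = hi := by
        rcases le_or_gt p hi with h | h
        · exfalso
          have hpc' : p ≤ c := by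
            rw [hcdef, clip, min_eq_left h]; exact le_max_right _ _
          linarith
        · rw [hcdef, clip, min_eq_right h.le, max_eq_right hlohi]
      have hmval : m = lam := by
        rw [hm, hcval, hhiz]; field_simp
      rw [hmval]
      have h1 : |p - c| = p - c := abs_of_pos (by linarith)
      have h3 : p - t ≤ |p - t| := le_abs_self _
      rw [h1]
      nlinarith [h3]
  linarith [hkl]

theorem prox_TV {n : ℕ} (p lam z : Fin n → ℝ) (ε : ℝ)
    (hp : ∀ i, 0 ≤ p i) (hlam : ∀ i, 0 ≤ lam i) (hz : ∀ i, 0 < z i)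
    (hε : 0 < ε) :
    let sstar : Fin n → ℝ := fun i =>
      clip (p i) (Real.exp (-(lam i) / ε) * z i) (Real.exp (lam i / ε) * z i)
    (∀ i, 0 ≤ sstar i) ∧
      ∀ s : Fin n → ℝ, (∀ i, 0 ≤ s i) →
        (∑ i, lam i * |p i - sstar i|) + ε * KLvec sstar z
          ≤ (∑ i, lam i * |p i - s i|) + ε * KLvec s z := by
  intro sstar
  constructor
  · intro i
    have hzi := hz i
    have : (0:ℝ) < Real.exp (-(lam i) / ε) * z i := by positivity
    exact le_trans this.le (le_max_left _ _)
  · intro s hs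
    have hrw : ∀ (u : Fin n → ℝ),
        (∑ i, lam i * |p i - u i|) + ε * KLvec u z
          = ∑ i, (lam i * |p i - u i| + ε * (u i * Real.log (u i / z i) - u i + z i)) := by
      intro u
      rw [KLvec, Finset.mul_sum, ← Finset.sum_add_distrib]
    rw [hrw sstar, hrw s]
    apply Finset.sum_le_sum
    intro i _
    have := one_dim (p i) (lam i) (z i) ε (s i) (hlam i) (hz i) hε (hs i)
    simpa [sstar, neg_div] using this
end

section
/- For p ∈ ℝ₊ⁿ, ε > 0, λ ∈ ℝ₊ⁿ, and z ∈ ℝⁿ with zᵢ > 0, the minimizer of s ↦ Σᵢ λᵢ(pᵢ − sᵢ) + ι_{0 ≤ s ≤ p} + ε·KL(s ∥ z) over s ∈ ℝⁿ is s*ᵢ = min(pᵢ, e^{λᵢ/ε} zᵢ) componentwise. -/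
open scoped BigOperators

private lemma slog_aux (s t : ℝ) (hs : 0 < s) (ht : 0 < t) :
    s - t ≤ s * Real.log (s / t) := by
  have h := Real.log_le_sub_one_of_pos (show 0 < t / s by positivity)
  have h2 : s * Real.log (t / s) ≤ s * (t / s - 1) :=
    mul_le_mul_of_nonneg_left h hs.le
  have h3 : s * (t / s - 1) = t - s := by field_simp
  have h4 : Real.log (s / t) = - Real.log (t / s) := by
    rw [Real.log_div hs.ne' ht.ne', Real.log_div ht.ne' hs.ne']; ring
  rw [h4]; nlinarith

private lemma key_ineq (p lam z ε s : ℝ) (hp : 0 ≤ p) (hl : 0 ≤ lam) (hz : 0 < z)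
    (he : 0 < ε) (hs0 : 0 ≤ s) (hsp : s ≤ p) :
    lam * (p - min p (Real.exp (lam / ε) * z))
      + ε * (min p (Real.exp (lam / ε) * z) * Real.log (min p (Real.exp (lam / ε) * z) / z)
          - min p (Real.exp (lam / ε) * z) + z)
      ≤ lam * (p - s) + ε * (s * Real.log (s / z) - s + z) := by
  set t := min p (Real.exp (lam / ε) * z) with ht_def
  have ht0 : 0 ≤ t := le_min hp (by positivity)
  have htz : t ≤ Real.exp (lam / ε) * z := min_le_right _ _
  -- suffices to compare g(x) = ε x log(x/z) - (lam+ε) x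
  have main : ε * (t * Real.log (t / z)) - (lam + ε) * t
      ≤ ε * (s * Real.log (s / z)) - (lam + ε) * s := by
    rcases eq_or_lt_of_le hs0 with hs | hs
    · -- s = 0
      rw [← hs]
      simp only [zero_div, Real.log_zero, mul_zero, zero_mul, sub_zero]
      rcases eq_or_lt_of_le ht0 with ht | ht
      · rw [← ht]; simp
      · have hlog : Real.log (t / z) ≤ lam / ε := by
          rw [Real.log_le_iff_le_exp (by positivity)]
          rw [div_le_iff₀ hz]; linarith [htz]
        have : ε * (t * Real.log (t / z)) ≤ lam * t := by
          have := mul_le_mul_of_nonneg_left hlog ht.le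
          calc ε * (t * Real.log (t / z)) ≤ ε * (t * (lam / ε)) := by nlinarith
            _ = lam * t := by field_simp
        nlinarith
    · -- s > 0
      have hts : 0 < t := lt_min (lt_of_lt_of_le hs hsp) (by positivity)
      have hbr : s - t ≤ s * Real.log (s / t) := slog_aux s t hs hts
      have hsplit : Real.log (s / z) = Real.log (s / t) + Real.log (t / z) := by
        rw [Real.log_div hs.ne' hz.ne', Real.log_div hts.ne' hz.ne',
          Real.log_div hs.ne' hts.ne']; ring
      have hlt : ε * Real.log (t / z) ≤ lam := by
        have hlog : Real.log (t / z) ≤ lam / ε := by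
          rw [Real.log_le_iff_le_exp (by positivity)]
          rw [div_le_iff₀ hz]; linarith [htz]
        calc ε * Real.log (t / z) ≤ ε * (lam / ε) := by nlinarith
          _ = lam := by field_simp
      have hprod : 0 ≤ (s - t) * (ε * Real.log (t / z) - lam) := by
        rcases le_or_gt p (Real.exp (lam / ε) * z) with h | h
        · have htp : t = p := min_eq_left h
          have : s - t ≤ 0 := by rw [htp]; linarith
          nlinarith [this, hlt]
        · have hta : t = Real.exp (lam / ε) * z := min_eq_right h.le
          have : Real.log (t / z) = lam / ε := by
            rw [hta, mul_div_assoc, div_self hz.ne', mul_one, Real.log_exp]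
          rw [this]
          have : ε * (lam / ε) - lam = 0 := by field_simp; ring
          rw [this, mul_zero]
      rw [hsplit]
      nlinarith [mul_le_mul_of_nonneg_left hbr he.le]
  nlinarith [main]

theorem prox_PTVbar {n : ℕ} (p lam z : Fin n → ℝ) (ε : ℝ)
    (hp : ∀ i, 0 ≤ p i) (hlam : ∀ i, 0 ≤ lam i) (hz : ∀ i, 0 < z i)
    (hε : 0 < ε) :
    let sstar : Fin n → ℝ := fun i => min (p i) (Real.exp (lam i / ε) * z i)
    (∀ i, 0 ≤ sstar i ∧ sstar i ≤ p i) ∧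
      ∀ s : Fin n → ℝ, (∀ i, 0 ≤ s i ∧ s i ≤ p i) →
        (∑ i, lam i * (p i - sstar i)) + ε * KLvec sstar z
          ≤ (∑ i, lam i * (p i - s i)) + ε * KLvec s z := by
  intro sstar
  constructor
  · intro i
    exact ⟨le_min (hp i) (mul_nonneg (Real.exp_pos _).le (hz i).le), min_le_left _ _⟩
  · intro s hs
    simp only [KLvec, Finset.mul_sum, ← Finset.sum_add_distrib]
    apply Finset.sum_le_sum
    intro i _
    exact key_ineq (p i) (lam i) (z i) ε (s i) (hp i) (hlam i) (hz i) hε (hs i).1 (hs i).2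
end

section
/- (Bregman projection onto a row-marginal inequality constraint.) Let γ ∈ ℝ^{n×m} with γ_{ij} > 0 and p ∈ ℝ₊ⁿ with pᵢ > 0. The minimizer of KL(γ' ∥ γ) over the set C₁ = {γ' ∈ ℝ₊^{n×m} : γ'1_m ≤ p} is γ* = diag(min(p/(γ1_m), 1_n)) γ, i.e., γ*_{ij} = min(pᵢ/(γ1_m)ᵢ, 1)·γ_{ij}. -/
open scoped BigOperators

/-- Discrete KL divergence between matrices, with `Real.log 0 = 0`. -/
noncomputable def KLmat {n m : ℕ} (γ' γ : Fin n → Fin m → ℝ) : ℝ :=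
  ∑ i, ∑ j, (γ' i j * Real.log (γ' i j / γ i j) - γ' i j + γ i j)

/-- Pointwise convexity (tangent-line) bound for the KL integrand. -/
lemma kl_key (g t x : ℝ) (hg : 0 < g) (ht : 0 < t) (hx : 0 ≤ x) :
    t * g * Real.log t - t * g + g + Real.log t * (x - t * g)
      ≤ x * Real.log (x / g) - x + g := by
  rcases eq_or_lt_of_le hx with h0 | hx
  · rw [← h0]
    have htg : 0 ≤ t * g := by positivity
    simp only [zero_div]
    ring_nf
    nlinarith [htg]
  · have htg : 0 < t * g := by positivity
    have h1 : Real.log (t * g / x) ≤ t * g / x - 1 :=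
      Real.log_le_sub_one_of_pos (by positivity)
    have h2 : Real.log (x / (t * g)) = -Real.log (t * g / x) := by
      rw [← Real.log_inv]
      congr 1
      field_simp
    have hxx : x * (t * g / x - 1) = t * g - x := by field_simp
    have h3 : x - t * g ≤ x * Real.log (x / (t * g)) := by
      have := mul_le_mul_of_nonneg_left h1 hx.le
      rw [hxx] at this
      rw [h2]
      nlinarith
    have h4 : Real.log (x / g) = Real.log (x / (t * g)) + Real.log t := by
      rw [← Real.log_mul (by positivity) (ne_of_gt ht)]
      congr 1
      field_simp
    rw [h4]
    nlinarith [h3]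

/-- Row-level optimality. -/
lemma kl_row {m : ℕ} (g x : Fin m → ℝ) (t : ℝ) (hg : ∀ j, 0 < g j)
    (ht : 0 < t) (hx : ∀ j, 0 ≤ x j)
    (hside : 0 ≤ Real.log t * ((∑ j, x j) - t * ∑ j, g j)) :
    ∑ j, (t * g j * Real.log (t * g j / g j) - t * g j + g j)
      ≤ ∑ j, (x j * Real.log (x j / g j) - x j + g j) := by
  have hlog : ∀ j : Fin m, t * g j / g j = t := fun j => by
    rw [mul_div_assoc, div_self (ne_of_gt (hg j)), mul_one]
  have key : ∀ j : Fin m,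
      t * g j * Real.log t - t * g j + g j + Real.log t * (x j - t * g j)
        ≤ x j * Real.log (x j / g j) - x j + g j := fun j =>
    kl_key (g j) t (x j) (hg j) ht (hx j)
  have hsum : ∑ j, (t * g j * Real.log t - t * g j + g j
        + Real.log t * (x j - t * g j))
      ≤ ∑ j, (x j * Real.log (x j / g j) - x j + g j) :=
    Finset.sum_le_sum fun j _ => key j
  have hsplit : ∑ j, (t * g j * Real.log t - t * g j + g j
        + Real.log t * (x j - t * g j))
      = (∑ j, (t * g j * Real.log t - t * g j + g j))
        + Real.log t * ((∑ j, x j) - t * ∑ j, g j) := by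
    rw [Finset.sum_add_distrib]
    congr 1
    rw [← Finset.mul_sum]
    congr 1
    rw [Finset.sum_sub_distrib]
    congr 1
    rw [← Finset.mul_sum]
  calc ∑ j, (t * g j * Real.log (t * g j / g j) - t * g j + g j)
      = ∑ j, (t * g j * Real.log t - t * g j + g j) := by
        refine Finset.sum_congr rfl fun j _ => by rw [hlog j]
    _ ≤ ∑ j, (t * g j * Real.log t - t * g j + g j)
        + Real.log t * ((∑ j, x j) - t * ∑ j, g j) := le_add_of_nonneg_right hside
    _ = ∑ j, (t * g j * Real.log t - t * g j + g j
        + Real.log t * (x j - t * g j)) := hsplit.symm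
    _ ≤ _ := hsum

theorem bregman_proj_row {n m : ℕ} (γ : Fin n → Fin m → ℝ) (p : Fin n → ℝ)
    (hγ : ∀ i j, 0 < γ i j) (hp : ∀ i, 0 < p i) :
    let γstar : Fin n → Fin m → ℝ := fun i j =>
      min (p i / ∑ j', γ i j') 1 * γ i j
    ((∀ i j, 0 ≤ γstar i j) ∧ (∀ i, ∑ j, γstar i j ≤ p i)) ∧
      ∀ γ' : Fin n → Fin m → ℝ,
        (∀ i j, 0 ≤ γ' i j) → (∀ i, ∑ j, γ' i j ≤ p i) →
          KLmat γstar γ ≤ KLmat γ' γ := by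
  intro γstar
  have hs_nonneg : ∀ i, 0 ≤ ∑ j', γ i j' :=
    fun i => Finset.sum_nonneg fun j _ => (hγ i j).le
  have htnn : ∀ i, 0 ≤ min (p i / ∑ j', γ i j') 1 := fun i =>
    le_min (div_nonneg (hp i).le (hs_nonneg i)) zero_le_one
  constructor
  · constructor
    · intro i j
      exact mul_nonneg (htnn i) (hγ i j).le
    · intro i
      have : ∑ j, γstar i j = min (p i / ∑ j', γ i j') 1 * ∑ j', γ i j' := by
        simp [γstar, Finset.mul_sum]
      rw [this]
      rcases eq_or_lt_of_le (hs_nonneg i) with hs0 | hs0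
      · rw [← hs0, mul_zero]; exact (hp i).le
      · calc min (p i / ∑ j', γ i j') 1 * ∑ j', γ i j'
            ≤ (p i / ∑ j', γ i j') * ∑ j', γ i j' :=
              mul_le_mul_of_nonneg_right (min_le_left _ _) (hs_nonneg i)
          _ = p i := div_mul_cancel₀ _ (ne_of_gt hs0)
  · intro γ' hγ'0 hγ'p
    rcases Nat.eq_zero_or_pos m with hm | hm
    · subst hm
      simp [KLmat]
    · unfold KLmat
      apply Finset.sum_le_sum
      intro i _
      have hne : (Finset.univ : Finset (Fin m)).Nonempty := by
        exact Finset.univ_nonempty_iff.mpr ⟨⟨0, hm⟩⟩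
      have hs : 0 < ∑ j', γ i j' :=
        Finset.sum_pos (fun j _ => hγ i j) hne
      set t := min (p i / ∑ j', γ i j') 1 with ht_def
      have ht : 0 < t := lt_min (div_pos (hp i) hs) one_pos
      have hside : 0 ≤ Real.log t * ((∑ j, γ' i j) - t * ∑ j, γ i j) := by
        rcases le_total (p i / ∑ j', γ i j') 1 with hle | hle
        · have ht1 : t = p i / ∑ j', γ i j' := min_eq_left hle
          have hts : t * ∑ j, γ i j = p i := by
            rw [ht1]; exact div_mul_cancel₀ _ (ne_of_gt hs)
          have hlognp : Real.log t ≤ 0 := Real.log_nonpos ht.le (ht1 ▸ hle)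
          have hdiff : (∑ j, γ' i j) - t * ∑ j, γ i j ≤ 0 := by
            rw [hts]; linarith [hγ'p i]
          nlinarith [mul_nonneg (neg_nonneg.mpr hlognp) (neg_nonneg.mpr hdiff)]
        · have ht1 : t = 1 := min_eq_right hle
          rw [ht1, Real.log_one, zero_mul]
      exact kl_row (γ i) (γ' i) t (hγ i) ht (hγ'0 i) hside
end
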